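/- arXiv:1003.2749 — 3 statements merged into one kernel-verified Lean document; each statement's English description precedes it below -/
import Mathlib

section
/- Let P be a weighted CSMA chain for (G,W) with stationary distribution π. Then Σ_{σ∈I(G)} π_σ (Σ_{i∈σ} log W_i) ≥ (max_{ρ∈I(G)} Σ_{i∈ρ} log W_i) − 13·n·2^n·log 2. -/
/-- An independent set of a graph, as a `Finset` of vertices. -/
def IsIndep {V : Type*} (G : SimpleGraph V) (s : Finset V) : Prop :=
  ∀ i ∈ s, ∀ j ∈ s, ¬ G.Adj i j

instance {V : Type*} (G : SimpleGraph V) [DecidableRel G.Adj] :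
    DecidablePred (IsIndep G) := fun s =>
  inferInstanceAs (Decidable (∀ i ∈ s, ∀ j ∈ s, ¬ G.Adj i j))

instance {V : Type*} (G : SimpleGraph V) :
    Nonempty {s : Finset V // IsIndep G s} :=
  ⟨⟨∅, fun i hi => absurd hi (Finset.notMem_empty i)⟩⟩

/-!
Multiplying the transition probabilities by `exp (w σ)`, where `w σ = ∑ i ∈ σ, log W i`,
makes the chain reversible up to a bounded factor: `exp (w σ) * P σ σ'` equals
`c σ * p σ σ' * exp (w (σ ∩ σ'))`, which is symmetric in `σ, σ'` up to the coefficients, and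
these lie in `[4⁻ⁿ, 2ⁿ]`. For a chain that is reversible with respect to weights `u` up to a
factor `β`, balance of the stationary flow across a cut shows that the ratio `π σ / u σ`
cannot drop by more than a factor `β` from one side of the cut to the other; cutting along
its level sets, the ratio varies by at most `β⁻⁽ᴷ⁻¹⁾` over the `K ≤ 2ⁿ` states. Hence
`π σ * exp (max w - w σ) ≤ 2^(3n(K - 1))`, and convexity of `exp` bounds the expected gap
`max w - w` by the logarithm of the sum of these, `log K + 3n(K - 1) log 2`.
-/

open Finset

section NearReversible

variable {S : Type*} [Fintype S] {P : S → S → ℝ} {π u : S → ℝ} {β : ℝ}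

def IsReversibleUpTo (β : ℝ) (u : S → ℝ) (P : S → S → ℝ) : Prop :=
  ∀ x y, β * u y * P y x ≤ u x * P x y

/-- Irreducibility, phrased through cuts. -/
def IsCutConnected (P : S → S → ℝ) : Prop :=
  ∀ A : Finset S, A.Nonempty → A ≠ univ → ∃ x ∈ A, ∃ y ∉ A, 0 < P y x

lemma sum_cut_flow_eq [DecidableEq S] (hrow : ∀ x, ∑ y, P x y = 1)
    (hπ : ∀ y, ∑ x, π x * P x y = π y) (A : Finset S) :
    ∑ x ∈ A, ∑ y ∈ Aᶜ, π x * P x y = ∑ x ∈ A, ∑ y ∈ Aᶜ, π y * P y x := by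
  have hout : ∑ x ∈ A, ∑ y, π x * P x y = ∑ x ∈ A, π x := by
    simp only [← mul_sum, hrow, mul_one]
  have hin : ∑ x ∈ A, ∑ y, π y * P y x = ∑ x ∈ A, π x := sum_congr rfl fun x _ => hπ x
  have hinside : ∑ x ∈ A, ∑ y ∈ A, π x * P x y = ∑ x ∈ A, ∑ y ∈ A, π y * P y x := sum_comm
  simp only [← sum_add_sum_compl A, sum_add_distrib] at hout hin
  linarith

lemma exists_cut_mul_ratio_le (hP0 : ∀ x y, 0 ≤ P x y)
    (hrow : ∀ x, ∑ y, P x y = 1) (hπ0 : ∀ x, 0 ≤ π x) (hπ : ∀ y, ∑ x, π x * P x y = π y)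
    (hu : ∀ x, 0 < u x) (hrev : IsReversibleUpTo β u P) {A : Finset S}
    (hA : ∃ x ∈ A, ∃ y ∉ A, 0 < P y x) :
    ∃ x ∈ A, ∃ y ∉ A, β * (π x / u x) ≤ π y / u y := by
  classical
  by_contra! hgap
  have hflow (x y : S) (hxy : π y / u y < β * (π x / u x)) :
      π y * P y x ≤ π x * P x y ∧ (0 < P y x → π y * P y x < π x * P x y) := by
    have hbound : β * (π x / u x) * (u y * P y x) ≤ π x * P x y := by
      have := mul_le_mul_of_nonneg_left (hrev x y) (div_nonneg (hπ0 x) (hu x).le)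
      calc β * (π x / u x) * (u y * P y x) = π x / u x * (β * u y * P y x) := by ring
        _ ≤ π x / u x * (u x * P x y) := this
        _ = π x * P x y := by field_simp [(hu x).ne']
    have hπy : π y * P y x = π y / u y * (u y * P y x) := by field_simp [(hu y).ne']
    refine ⟨?_, fun hpos => ?_⟩
    · rw [hπy]
      exact (mul_le_mul_of_nonneg_right hxy.le (mul_nonneg (hu y).le (hP0 y x))).trans hbound
    · rw [hπy]
      exact (mul_lt_mul_of_pos_right hxy (mul_pos (hu y) hpos)).trans_le hbound
  obtain ⟨x₀, hx₀, y₀, hy₀, hpos⟩ := hA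
  have hy₀ : y₀ ∈ Aᶜ := mem_compl.mpr hy₀
  refine (sum_cut_flow_eq hrow hπ A).not_gt ?_
  refine sum_lt_sum (fun x hx => sum_le_sum fun y hy => ?_) ⟨x₀, hx₀, ?_⟩
  · exact (hflow x y (hgap x hx y (mem_compl.mp hy))).1
  · exact sum_lt_sum (fun y hy => (hflow x₀ y (hgap x₀ hx₀ y (mem_compl.mp hy))).1)
      ⟨y₀, hy₀, (hflow x₀ y₀ (hgap x₀ hx₀ y₀ (mem_compl.mp hy₀))).2 hpos⟩

lemma pow_mul_ratio_le_ratio (hP0 : ∀ x y, 0 ≤ P x y)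
    (hrow : ∀ x, ∑ y, P x y = 1) (hπ0 : ∀ x, 0 ≤ π x) (hπ : ∀ y, ∑ x, π x * P x y = π y)
    (hu : ∀ x, 0 < u x) (hrev : IsReversibleUpTo β u P) (hcut : IsCutConnected P)
    (hβ0 : 0 ≤ β) (hβ1 : β ≤ 1) (x y : S) :
    β ^ (Fintype.card S - 1) * (π x / u x) ≤ π y / u y := by
  have hx : 0 ≤ π x / u x := div_nonneg (hπ0 x) (hu x).le
  set B : ℕ → Finset S := fun j => univ.filter fun z => β ^ j * (π x / u x) ≤ π z / u z
  have hxB (j : ℕ) : x ∈ B j := by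
    simpa [B] using mul_le_of_le_one_left hx (pow_le_one₀ hβ0 hβ1)
  have hBmono (j : ℕ) : B j ⊆ B (j + 1) := by
    intro z hz
    simp only [B, mem_filter, mem_univ, true_and] at hz ⊢
    refine le_trans ?_ hz
    rw [pow_succ]
    exact mul_le_mul_of_nonneg_right (mul_le_of_le_one_right (pow_nonneg hβ0 j) hβ1) hx
  -- an edge entering the cut `B j` brings a new state into `B (j + 1)`
  have hgrow (j : ℕ) : B j = univ ∨ j + 1 ≤ #(B j) := by
    induction j with
    | zero => exact .inr (card_pos.mpr ⟨x, hxB 0⟩)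
    | succ j ih =>
      by_cases hj : B j = univ
      · exact .inl (eq_univ_of_forall fun z => hBmono j (hj ▸ mem_univ z))
      replace ih := ih.resolve_left hj
      obtain ⟨z, hz, w, hw, hzw⟩ := exists_cut_mul_ratio_le hP0 hrow hπ0 hπ hu hrev
        (hcut (B j) ⟨x, hxB j⟩ hj)
      have hwB : w ∈ B (j + 1) := by
        simp only [B, mem_filter, mem_univ, true_and] at hz ⊢
        calc β ^ (j + 1) * (π x / u x) = β * (β ^ j * (π x / u x)) := by ring
          _ ≤ β * (π z / u z) := mul_le_mul_of_nonneg_left hz hβ0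
          _ ≤ π w / u w := hzw
      have hlt : #(B j) < #(B (j + 1)) :=
        card_lt_card ((ssubset_iff_of_subset (hBmono j)).mpr ⟨w, hwB, hw⟩)
      exact .inr (by omega)
  have hall : B (Fintype.card S - 1) = univ := by
    rcases hgrow (Fintype.card S - 1) with h | h
    · exact h
    · have := Fintype.card_pos_iff.mpr ⟨x⟩
      exact eq_univ_of_card _ (le_antisymm (card_le_univ _) (by omega))
  have hy : y ∈ B (Fintype.card S - 1) := hall ▸ mem_univ y
  simpa [B] using hy

lemma isCutConnected_of_hub {e : S} (he : ∀ x, 0 < P x e ∧ 0 < P e x) :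
    IsCutConnected P := by
  intro A hA hAu
  obtain ⟨y, hy⟩ := not_forall.mp (mt eq_univ_of_forall hAu)
  by_cases heA : e ∈ A
  · exact ⟨e, heA, y, hy, (he y).1⟩
  · obtain ⟨x, hx⟩ := hA
    exact ⟨x, hx, e, heA, (he x).2⟩

lemma sum_mul_le_log_of_sum_mul_exp_le {ι : Type*} {s : Finset ι} {μ f : ι → ℝ} {C : ℝ}
    (hμ0 : ∀ i ∈ s, 0 ≤ μ i) (hμ1 : ∑ i ∈ s, μ i = 1) (hC : 0 < C)
    (h : ∑ i ∈ s, μ i * Real.exp (f i) ≤ C) :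
    ∑ i ∈ s, μ i * f i ≤ Real.log C := by
  -- the tangent line of `exp` at `log C`
  have htangent (x : ℝ) : x ≤ Real.log C - 1 + Real.exp x / C := by
    have := Real.add_one_le_exp (x - Real.log C)
    rw [Real.exp_sub, Real.exp_log hC] at this
    linarith
  calc ∑ i ∈ s, μ i * f i ≤ ∑ i ∈ s, μ i * (Real.log C - 1 + Real.exp (f i) / C) :=
        sum_le_sum fun i hi => mul_le_mul_of_nonneg_left (htangent (f i)) (hμ0 i hi)
    _ = Real.log C - 1 + (∑ i ∈ s, μ i * Real.exp (f i)) / C := by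
        simp only [mul_add, sum_add_distrib, ← sum_mul, hμ1, sum_div, mul_div_assoc]
        ring
    _ ≤ Real.log C - 1 + C / C := by gcongr
    _ = Real.log C := by rw [div_self hC.ne']; ring

theorem sup_sub_le_sum_mul_of_isReversibleUpTo {φ : S → ℝ}
    (hP0 : ∀ x y, 0 ≤ P x y) (hrow : ∀ x, ∑ y, P x y = 1) (hπ0 : ∀ x, 0 ≤ π x)
    (hπ1 : ∑ x, π x = 1) (hπ : ∀ y, ∑ x, π x * P x y = π y)
    (hrev : IsReversibleUpTo β (fun x => Real.exp (φ x)) P) (hcut : IsCutConnected P)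
    (hβ0 : 0 < β) (hβ1 : β ≤ 1) (ρ : S) :
    φ ρ - Real.log (Fintype.card S) + (Fintype.card S - 1 : ℕ) * Real.log β ≤
      ∑ x, π x * φ x := by
  set K := Fintype.card S
  have hK : (0 : ℝ) < K := Nat.cast_pos.mpr (Fintype.card_pos_iff.mpr ⟨ρ⟩)
  have hratio (x : S) : β ^ (K - 1) * (π x * Real.exp (φ ρ - φ x)) ≤ 1 := by
    have h := pow_mul_ratio_le_ratio hP0 hrow hπ0 hπ (fun x => Real.exp_pos (φ x)) hrev hcut
      hβ0.le hβ1 x ρ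
    calc β ^ (K - 1) * (π x * Real.exp (φ ρ - φ x))
        = β ^ (K - 1) * (π x / Real.exp (φ x)) * Real.exp (φ ρ) := by
          rw [Real.exp_sub]; ring
      _ ≤ π ρ / Real.exp (φ ρ) * Real.exp (φ ρ) := by gcongr
      _ = π ρ := div_mul_cancel₀ _ (Real.exp_pos _).ne'
      _ ≤ 1 := hπ1 ▸ single_le_sum (fun x _ => hπ0 x) (mem_univ ρ)
  have hsum : ∑ x, π x * Real.exp (φ ρ - φ x) ≤ K / β ^ (K - 1) := by
    rw [le_div_iff₀' (by positivity), mul_sum]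
    simpa using sum_le_sum fun x (_ : x ∈ univ) => hratio x
  have hgap := sum_mul_le_log_of_sum_mul_exp_le (fun x _ => hπ0 x) hπ1 (by positivity) hsum
  rw [Real.log_div hK.ne' (by positivity), Real.log_pow] at hgap
  simp only [mul_sub, sum_sub_distrib, ← sum_mul, hπ1, one_mul] at hgap
  linarith

end NearReversible

abbrev IndepSet {V : Type*} (G : SimpleGraph V) := {s : Finset V // IsIndep G s}

lemma isIndep_empty {V : Type*} (G : SimpleGraph V) : IsIndep G ∅ := by
  simp [IsIndep]

lemma IsIndep.union_self {V : Type*} [DecidableEq V] {G : SimpleGraph V} {s : Finset V}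
    (hs : IsIndep G s) : IsIndep G (s ∪ s) := by
  rwa [Finset.union_self]

lemma card_indep_le {V : Type*} [Fintype V] (G : SimpleGraph V) [DecidableRel G.Adj] :
    Fintype.card (IndepSet G) ≤ 2 ^ Fintype.card V :=
  (Fintype.card_subtype_le _).trans Fintype.card_finset.le

section CSMA

variable {V : Type*} [DecidableEq V] {G : SimpleGraph V} {W : V → ℝ}

variable {P : IndepSet G → IndepSet G → ℝ} {σ : IndepSet G} {c : ℝ} {p : IndepSet G → ℝ}

lemma empty_isHub (hPpos : ∀ σ σ', 0 < P σ σ' ↔ IsIndep G (σ.1 ∪ σ'.1)) (σ : IndepSet G) :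
    0 < P σ ⟨∅, isIndep_empty G⟩ ∧ 0 < P ⟨∅, isIndep_empty G⟩ σ := by
  simpa [hPpos] using σ.2

lemma exp_sum_log_mul_eq (hW : ∀ i, 0 < W i)
    (hform : ∀ σ', IsIndep G (σ.1 ∪ σ'.1) → P σ σ' = c * (∏ i ∈ σ.1 \ σ'.1, (W i)⁻¹) * p σ')
    {σ' : IndepSet G} (hσσ' : IsIndep G (σ.1 ∪ σ'.1)) :
    Real.exp (∑ i ∈ σ.1, Real.log (W i)) * P σ σ' =
      c * p σ' * Real.exp (∑ i ∈ σ.1 ∩ σ'.1, Real.log (W i)) := by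
  have hcancel :
      Real.exp (∑ i ∈ σ.1 \ σ'.1, Real.log (W i)) * ∏ i ∈ σ.1 \ σ'.1, (W i)⁻¹ = 1 := by
    rw [Real.exp_sum, ← prod_mul_distrib]
    exact prod_eq_one fun i _ => by rw [Real.exp_log (hW i), mul_inv_cancel₀ (hW i).ne']
  rw [hform σ' hσσ', ← sum_inter_add_sum_sdiff σ.1 σ'.1, Real.exp_add]
  linear_combination (c * p σ' * Real.exp (∑ i ∈ σ.1 ∩ σ'.1, Real.log (W i))) * hcancel

variable [Fintype V] [DecidableRel G.Adj]

lemma coeff_le_two_pow (hP0 : ∀ σ σ', 0 ≤ P σ σ') (hProw : ∀ σ, ∑ σ', P σ σ' = 1)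
    (hp : ∀ σ', p σ' ∈ Set.Icc (((2 : ℝ) ^ (Fintype.card V))⁻¹) 1)
    (hform : ∀ σ', IsIndep G (σ.1 ∪ σ'.1) → P σ σ' = c * (∏ i ∈ σ.1 \ σ'.1, (W i)⁻¹) * p σ') :
    c ≤ 2 ^ Fintype.card V := by
  have hdiag : c * p σ = P σ σ := by simpa using (hform σ σ.2.union_self).symm
  have hPσ : P σ σ ≤ 1 := hProw σ ▸ single_le_sum (fun σ' _ => hP0 σ σ') (mem_univ σ)
  have hpσ : 1 ≤ 2 ^ Fintype.card V * p σ :=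
    (inv_le_iff_one_le_mul₀' (by positivity)).mp (hp σ).1
  have hpσ0 : 0 < p σ := lt_of_lt_of_le (by positivity) (hp σ).1
  nlinarith

lemma inv_two_pow_le_coeff (hW : ∀ i, 1 ≤ W i) (hProw : ∀ σ, ∑ σ', P σ σ' = 1)
    (hPpos : ∀ σ σ', 0 < P σ σ' ↔ IsIndep G (σ.1 ∪ σ'.1)) (hc : 0 < c)
    (hp : ∀ σ', p σ' ∈ Set.Icc (((2 : ℝ) ^ (Fintype.card V))⁻¹) 1)
    (hform : ∀ σ', IsIndep G (σ.1 ∪ σ'.1) → P σ σ' = c * (∏ i ∈ σ.1 \ σ'.1, (W i)⁻¹) * p σ') :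
    ((2 : ℝ) ^ Fintype.card V)⁻¹ ≤ c := by
  have hPle (σ' : IndepSet G) : P σ σ' ≤ c := by
    by_cases hσσ' : IsIndep G (σ.1 ∪ σ'.1)
    · have hprod : ∏ i ∈ σ.1 \ σ'.1, (W i)⁻¹ ≤ 1 :=
        prod_le_one (fun i _ => by have := hW i; positivity)
          fun i _ => inv_le_one_of_one_le₀ (hW i)
      rw [hform σ' hσσ']
      calc c * (∏ i ∈ σ.1 \ σ'.1, (W i)⁻¹) * p σ' ≤ c * 1 * 1 := by
            gcongr
            exacts [(hp σ').1.trans' (by positivity), (hp σ').2]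
        _ = c := by ring
    · exact (le_of_not_gt (mt (hPpos σ σ').mp hσσ')).trans hc.le
  have hcard : (Fintype.card (IndepSet G) : ℝ) ≤ 2 ^ Fintype.card V := by exact_mod_cast card_indep_le G
  have : 1 ≤ 2 ^ Fintype.card V * c :=
    calc (1 : ℝ) = ∑ σ', P σ σ' := (hProw σ).symm
      _ ≤ ∑ _σ' : IndepSet G, c := sum_le_sum fun σ' _ => hPle σ'
      _ = Fintype.card (IndepSet G) * c := by simp
      _ ≤ 2 ^ Fintype.card V * c := by gcongr
  exact (inv_le_iff_one_le_mul₀' (by positivity)).mpr this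

lemma isReversibleUpTo_csma (hW : ∀ i, 1 ≤ W i) (hP0 : ∀ σ σ', 0 ≤ P σ σ')
    (hProw : ∀ σ, ∑ σ', P σ σ' = 1) (hPpos : ∀ σ σ', 0 < P σ σ' ↔ IsIndep G (σ.1 ∪ σ'.1))
    {c : IndepSet G → ℝ} {p : IndepSet G → IndepSet G → ℝ} (hc : ∀ σ, 0 < c σ)
    (hp : ∀ σ σ', p σ σ' ∈ Set.Icc (((2 : ℝ) ^ (Fintype.card V))⁻¹) 1)
    (hform : ∀ σ σ', IsIndep G (σ.1 ∪ σ'.1) →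
      P σ σ' = c σ * (∏ i ∈ σ.1 \ σ'.1, (W i)⁻¹) * p σ σ') :
    IsReversibleUpTo (2 ^ (3 * Fintype.card V))⁻¹
      (fun σ => Real.exp (∑ i ∈ σ.1, Real.log (W i))) P := by
  intro x y
  by_cases hyx : IsIndep G (y.1 ∪ x.1)
  · have hxy : IsIndep G (x.1 ∪ y.1) := union_comm x.1 y.1 ▸ hyx
    have hW0 (i : V) : 0 < W i := one_pos.trans_le (hW i)
    have hcy := coeff_le_two_pow hP0 hProw (hp y) (hform y)
    have hcx := inv_two_pow_le_coeff hW hProw hPpos (hc x) (hp x) (hform x)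
    have hcoeff : (2 ^ (3 * Fintype.card V))⁻¹ * (c y * p y x) ≤ c x * p x y :=
      calc (2 ^ (3 * Fintype.card V))⁻¹ * (c y * p y x)
          ≤ (2 ^ (3 * Fintype.card V))⁻¹ * (2 ^ Fintype.card V * 1) := by
            gcongr
            exacts [(hp y x).1.trans' (by positivity), (hp y x).2]
        _ = ((2 : ℝ) ^ Fintype.card V)⁻¹ * ((2 : ℝ) ^ Fintype.card V)⁻¹ := by
            rw [pow_mul']
            field_simp
        _ ≤ c x * p x y := mul_le_mul hcx (hp x y).1 (by positivity) (hc x).le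
    rw [mul_assoc, exp_sum_log_mul_eq hW0 (hform y) hyx, exp_sum_log_mul_eq hW0 (hform x) hxy,
      inter_comm, ← mul_assoc]
    exact mul_le_mul_of_nonneg_right hcoeff (Real.exp_pos _).le
  · have hPyx : P y x = 0 := le_antisymm (le_of_not_gt (mt (hPpos y x).mp hyx)) (hP0 y x)
    rw [hPyx, mul_zero]
    exact mul_nonneg (Real.exp_pos _).le (hP0 x y)

end CSMA

theorem csma_stationary_weight_close_to_max_general
    {V : Type*} [Fintype V] [DecidableEq V]
    (G : SimpleGraph V) [DecidableRel G.Adj]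
    (W : V → ℝ) (hW : ∀ i, 1 ≤ W i)
    (P : {s : Finset V // IsIndep G s} → {s : Finset V // IsIndep G s} → ℝ)
    (hP0 : ∀ σ σ', 0 ≤ P σ σ')
    (hProw : ∀ σ, ∑ σ', P σ σ' = 1)
    (hPpos : ∀ σ σ', 0 < P σ σ' ↔ IsIndep G (σ.1 ∪ σ'.1))
    (hPform : ∀ σ, ∃ c : ℝ, 0 < c ∧ ∃ p : {s : Finset V // IsIndep G s} → ℝ,
      (∀ σ', p σ' ∈ Set.Icc (((2 : ℝ) ^ (Fintype.card V))⁻¹) 1) ∧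
      ∀ σ', IsIndep G (σ.1 ∪ σ'.1) →
        P σ σ' = c * (∏ i ∈ σ.1 \ σ'.1, (W i)⁻¹) * p σ')
    (π : {s : Finset V // IsIndep G s} → ℝ)
    (hπ0 : ∀ σ, 0 < π σ) (hπsum : ∑ σ, π σ = 1)
    (hπstat : ∀ σ', ∑ σ, π σ * P σ σ' = π σ')
    :
    (∑ σ : {s : Finset V // IsIndep G s}, π σ * ∑ i ∈ σ.1, Real.log (W i))
      ≥ (Finset.univ.sup' Finset.univ_nonempty
          (fun ρ : {s : Finset V // IsIndep G s} => ∑ i ∈ ρ.1, Real.log (W i)))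
        - 13 * (Fintype.card V) * 2 ^ (Fintype.card V) * Real.log 2 := by
  choose c hc p hp hform using hPform
  obtain ⟨ρ, -, hρ⟩ := exists_mem_eq_sup' univ_nonempty
    fun ρ : IndepSet G => ∑ i ∈ ρ.1, Real.log (W i)
  have hgap := sup_sub_le_sum_mul_of_isReversibleUpTo hP0 hProw (fun σ => (hπ0 σ).le) hπsum
    hπstat (isReversibleUpTo_csma hW hP0 hProw hPpos hc hp hform)
    (isCutConnected_of_hub (empty_isHub hPpos)) (by positivity)
    (inv_le_one_of_one_le₀ (one_le_pow₀ one_le_two)) ρ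
  set n := Fintype.card V
  have hK := card_indep_le G
  have hlogK : Real.log (Fintype.card (IndepSet G)) ≤ n * Real.log 2 := by
    rw [← Real.log_pow]
    exact Real.log_le_log (Nat.cast_pos.mpr Fintype.card_pos) (by exact_mod_cast hK)
  have hK' : ((Fintype.card (IndepSet G) - 1 : ℕ) : ℝ) ≤ 2 ^ n := by
    exact_mod_cast (Nat.sub_le _ _).trans hK
  have hn : (n : ℝ) ≤ n * 2 ^ n := le_mul_of_one_le_right (by positivity) (one_le_pow₀ one_le_two)
  rw [Real.log_inv, Real.log_pow, Nat.cast_mul, Nat.cast_ofNat] at hgap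
  have hlog2 := Real.log_pos one_lt_two
  rw [hρ, ge_iff_le]
  nlinarith [mul_le_mul_of_nonneg_right hK' (by positivity : (0 : ℝ) ≤ 3 * n * Real.log 2)]

/-- For a weighted CSMA chain `P` for `(G, W)` with stationary
distribution `π`, the stationary expected weight satisfies
`Σ_σ π_σ (Σ_{i∈σ} log W_i) ≥ (max_{ρ∈I(G)} Σ_{i∈ρ} log W_i) - 13·n·2^n·log 2`. -/
theorem csma_stationary_weight_close_to_max
    {V : Type*} [Fintype V] [DecidableEq V] [Nonempty V]
    (G : SimpleGraph V) [DecidableRel G.Adj]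
    (W : V → ℝ) (hW : ∀ i, 1 ≤ W i)
    (P : {s : Finset V // IsIndep G s} → {s : Finset V // IsIndep G s} → ℝ)
    (hP0 : ∀ σ σ', 0 ≤ P σ σ')
    (hProw : ∀ σ, ∑ σ', P σ σ' = 1)
    (hPpos : ∀ σ σ', 0 < P σ σ' ↔ IsIndep G (σ.1 ∪ σ'.1))
    (hPform : ∀ σ, ∃ c : ℝ, 0 < c ∧ ∃ p : {s : Finset V // IsIndep G s} → ℝ,
      (∀ σ', p σ' ∈ Set.Icc (((2 : ℝ) ^ (Fintype.card V))⁻¹) 1) ∧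
      ∀ σ', IsIndep G (σ.1 ∪ σ'.1) →
        P σ σ' = c * (∏ i ∈ σ.1 \ σ'.1, (W i)⁻¹) * p σ')
    (π : {s : Finset V // IsIndep G s} → ℝ)
    (hπ0 : ∀ σ, 0 < π σ) (hπsum : ∑ σ, π σ = 1)
    (hπstat : ∀ σ', ∑ σ, π σ * P σ σ' = π σ')
    :
    (∑ σ : {s : Finset V // IsIndep G s}, π σ * ∑ i ∈ σ.1, Real.log (W i))
      ≥ (Finset.univ.sup' Finset.univ_nonempty
          (fun ρ : {s : Finset V // IsIndep G s} => ∑ i ∈ ρ.1, Real.log (W i)))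
        - 13 * (Fintype.card V) * 2 ^ (Fintype.card V) * Real.log 2 :=
  csma_stationary_weight_close_to_max_general G W hW P hP0 hProw hPpos hPform π hπ0 hπsum hπstat
end

section
/- Let S be a finite set with m = |S| ≥ 1 elements, let Q be an irreducible row-stochastic matrix on S, let c ∈ (0,1], and let P be a row-stochastic matrix on S such that c·Q(x,y) ≤ P(x,y) ≤ c^{-1}·Q(x,y) for all x, y ∈ S (so in particular P and Q have the same support and P is also irreducible). Let π and π̂ be the unique stationary distributions of P and Q respectively. Then for every x ∈ S: c^{2(m−1)}·π̂_x ≤ π_x ≤ c^{-2(m−1)}·π̂_x. -/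
/-!
By the Markov chain tree theorem, the stationary distribution of an irreducible stochastic
matrix `M` is proportional to `w_M x = ∑_g ∏_{y ≠ x} M y (g y)`, the sum running over the
spanning trees directed towards `x`, encoded by their parent maps `g`. Each of these products
has `m - 1` factors, so `c^(m-1) w_Q ≤ w_P` and `c^(m-1) w_P ≤ w_Q` entrywise, and normalising
`w_P` and `w_Q` to probability vectors costs one more factor `c^(m-1)`.
-/

open Finset Function Matrix

section Iterate
variable {α : Type*}

theorem exists_iterate_eq_of_forall_ne_eq {f g : α → α} {w : α} (hfg : ∀ a ≠ w, f a = g a)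
    {n : ℕ} {y : α} (h : f^[n] y = w) : ∃ k, g^[k] y = w := by
  induction n generalizing y with
  | zero => exact ⟨0, h⟩
  | succ n ih =>
    by_cases hy : y = w
    · exact ⟨0, hy⟩
    · rw [iterate_succ_apply, hfg y hy] at h
      obtain ⟨k, hk⟩ := ih h
      exact ⟨k + 1, hk⟩

theorem iterate_eq_of_forall_ne_eq {f g : α → α} {w : α} (hfg : ∀ a ≠ w, f a = g a)
    {x : α} {n : ℕ} (hn : ∀ i < n, g^[i] x ≠ w) : f^[n] x = g^[n] x := by
  induction n with
  | zero => rfl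
  | succ n ih =>
    rw [iterate_succ_apply', iterate_succ_apply', ih fun i hi => hn i (by omega)]
    exact hfg _ (hn n n.lt_succ_self)

theorem exists_iterate_eq_of_lt {g : α → α} {x : α} (d : α → ℕ) (hd : ∀ y ≠ x, d (g y) < d y)
    (y : α) : ∃ k, g^[k] y = x := by
  induction hy : d y using Nat.strong_induction_on generalizing y with
  | _ n ih =>
    by_cases hyx : y = x
    · exact ⟨0, hyx⟩
    · obtain ⟨k, hk⟩ := ih _ (hy ▸ hd y hyx) (g y) rfl
      exact ⟨k + 1, hk⟩

variable [DecidableEq α]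

/-- If `g` is the parent map of a tree rooted at `z`, then redirecting `z` to `x` closes a cycle
through `x` whose last point before returning to `x` is `z`. -/
theorem iterate_pred_minimalPeriod_update {g : α → α} {z : α} (hgz : g z = z)
    (hg : ∀ y, ∃ k, g^[k] y = z) (x : α) :
    (update g z x)^[minimalPeriod (update g z x) x - 1] x = z := by
  set h := update g z x with h_def
  have hhg : ∀ a ≠ z, h a = g a := fun a ha => update_of_ne ha x g
  set j := Nat.find (hg x)
  have hj : g^[j] x = z := Nat.find_spec (hg x)
  have hhj : ∀ i ≤ j, h^[i] x = g^[i] x := fun i hi =>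
    iterate_eq_of_forall_ne_eq hhg fun i' hi' => Nat.find_min (hg x) (by omega)
  have hper : IsPeriodicPt h (j + 1) x := by
    rw [IsPeriodicPt, IsFixedPt, iterate_succ_apply', hhj j le_rfl, hj, h_def, update_self]
  have hpos := hper.minimalPeriod_pos j.succ_pos
  have hle := hper.minimalPeriod_le j.succ_pos
  suffices minimalPeriod h x = j + 1 by rw [this, Nat.add_sub_cancel, hhj j le_rfl, hj]
  by_contra hne
  set p := minimalPeriod h x
  -- a return of `g` to `x` before reaching the fixed point `z` would force `x = z`
  have hgper : IsPeriodicPt g p x := by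
    rw [IsPeriodicPt, IsFixedPt, ← hhj p (by omega)]
    exact iterate_minimalPeriod
  have hxz : x = z := by
    have hmul := hgper.mul_const j
    rw [IsPeriodicPt, IsFixedPt, show p * j = (p * j - j) + j by
      have : j ≤ p * j := Nat.le_mul_of_pos_left j hpos
      omega, iterate_add_apply, hj, iterate_fixed hgz] at hmul
    exact hmul.symm
  have : j = 0 := (Nat.find_eq_zero (hg x)).mpr (by simpa using hxz)
  omega

end Iterate

section TreeTheorem
variable {S : Type*} [Fintype S] [DecidableEq S]

open scoped Classical in
/-- The maps `h : S → S` every orbit of which passes through `x`. Those fixing `x` are the parent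
maps of the spanning trees of `S` directed towards the root `x`. -/
noncomputable def funnels (x : S) : Finset (S → S) := {h | ∀ y, ∃ k, h^[k] y = x}

noncomputable def rootedTrees (x : S) : Finset (S → S) := {g ∈ funnels x | g x = x}

theorem mem_funnels {x : S} {h : S → S} : h ∈ funnels x ↔ ∀ y, ∃ k, h^[k] y = x := by
  classical simp [funnels]

theorem mem_rootedTrees {x : S} {g : S → S} : g ∈ rootedTrees x ↔ g ∈ funnels x ∧ g x = x :=
  mem_filter

theorem mem_funnels_of_iterate_eq {x z : S} {h : S → S} (hh : h ∈ funnels x) {k : ℕ}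
    (hk : h^[k] x = z) : h ∈ funnels z := by
  refine mem_funnels.mpr fun y => ?_
  obtain ⟨i, hi⟩ := mem_funnels.mp hh y
  exact ⟨k + i, by rw [iterate_add_apply, hi, hk]⟩

theorem update_mem_funnels {z : S} {h : S → S} (hh : h ∈ funnels z) (w : S) :
    update h z w ∈ funnels z :=
  mem_funnels.mpr fun y =>
    exists_iterate_eq_of_forall_ne_eq (fun _ ha => (update_of_ne ha w h).symm)
      (mem_funnels.mp hh y).choose_spec

theorem update_self_mem_rootedTrees {z : S} {h : S → S} (hh : h ∈ funnels z) :
    update h z z ∈ rootedTrees z :=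
  mem_rootedTrees.mpr ⟨update_mem_funnels hh z, update_self z z h⟩

theorem mem_periodicPts_of_mem_funnels {x : S} {h : S → S} (hh : h ∈ funnels x) :
    x ∈ periodicPts h := by
  obtain ⟨k, hk⟩ := mem_funnels.mp hh (h x)
  exact ⟨k + 1, k.succ_pos, hk⟩

variable {R : Type*} [CommSemiring R]

noncomputable def treeWeight (M : Matrix S S R) (x : S) : R :=
  ∑ g ∈ rootedTrees x, ∏ y ∈ univ.erase x, M y (g y)

theorem prod_apply_update (M : Matrix S S R) (g : S → S) (z w : S) :
    ∏ y, M y (update g z w y) = M z w * ∏ y ∈ univ.erase z, M y (g y) := by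
  rw [← mul_prod_erase univ _ (mem_univ z), update_self]
  congr 1
  exact prod_congr rfl fun y hy => by rw [update_of_ne (ne_of_mem_erase hy)]

/-- Adding the edge `z → x` to a tree rooted at `z` is a bijection onto `funnels x`. -/
theorem sum_treeWeight_mul_eq_sum_funnels (M : Matrix S S R) (x : S) :
    ∑ z, treeWeight M z * M z x = ∑ h ∈ funnels x, ∏ y, M y (h y) := by
  simp_rw [treeWeight, sum_mul]
  rw [sum_sigma']
  refine sum_nbij' (fun p => update p.2 p.1 x)
    (fun h => ⟨h^[minimalPeriod h x - 1] x, update h (h^[minimalPeriod h x - 1] x)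
      (h^[minimalPeriod h x - 1] x)⟩) ?_ ?_ ?_ ?_ ?_
  · rintro ⟨z, g⟩ hg
    obtain ⟨hgf, -⟩ := mem_rootedTrees.mp (mem_sigma.mp hg).2
    exact mem_funnels_of_iterate_eq (update_mem_funnels hgf x) (k := 1)
      (by rw [iterate_one, update_self])
  · intro h hh
    exact mem_sigma.mpr ⟨mem_univ _, update_self_mem_rootedTrees
      (mem_funnels_of_iterate_eq hh rfl)⟩
  · rintro ⟨z, g⟩ hg
    obtain ⟨hgf, hgz : g z = z⟩ := mem_rootedTrees.mp (mem_sigma.mp hg).2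
    have hz := iterate_pred_minimalPeriod_update hgz (mem_funnels.mp hgf) x
    have hg' : update g z z = g := update_eq_self_iff.mpr hgz.symm
    simp only [hz, update_idem, hg']
  · intro h hh
    have hpos := minimalPeriod_pos_of_mem_periodicPts (mem_periodicPts_of_mem_funnels hh)
    have hz : h (h^[minimalPeriod h x - 1] x) = x := by
      rw [← iterate_succ_apply' h, Nat.succ_eq_add_one, Nat.sub_add_cancel hpos,
        iterate_minimalPeriod]
    rw [update_idem, update_eq_self_iff.mpr hz.symm]
  · rintro ⟨z, g⟩ -
    rw [prod_apply_update, mul_comm]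

/-- Choosing the image of the root is a bijection from trees rooted at `x` times `S` onto
`funnels x`; summing over that image uses up one row sum of `M`. -/
theorem sum_funnels_eq_treeWeight {M : Matrix S S R} (hrow : ∀ x, ∑ y, M x y = 1) (x : S) :
    ∑ h ∈ funnels x, ∏ y, M y (h y) = treeWeight M x := by
  have hbij : ∑ p ∈ rootedTrees x ×ˢ univ, M x p.2 * ∏ y ∈ univ.erase x, M y (p.1 y)
      = ∑ h ∈ funnels x, ∏ y, M y (h y) := by
    refine sum_nbij' (fun p => update p.1 x p.2) (fun h : S → S => (update h x x, h x))
      ?_ ?_ ?_ ?_ ?_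
    · rintro ⟨g, w⟩ hg
      exact update_mem_funnels (mem_rootedTrees.mp (mem_product.mp hg).1).1 w
    · intro h hh
      exact mem_product.mpr ⟨update_self_mem_rootedTrees hh, mem_univ _⟩
    · rintro ⟨g, w⟩ hg
      have hgx : g x = x := (mem_rootedTrees.mp (mem_product.mp hg).1).2
      have hg' : update g x x = g := update_eq_self_iff.mpr hgx.symm
      simp only [update_idem, update_self, hg']
    · intro h _
      simp only [update_idem, update_eq_self]
    · rintro ⟨g, w⟩ -
      rw [prod_apply_update]
  rw [← hbij, sum_product, treeWeight]
  refine sum_congr rfl fun g _ => ?_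
  dsimp only
  rw [← sum_mul, hrow, one_mul]

theorem treeWeight_vecMul {M : Matrix S S R} (hrow : ∀ x, ∑ y, M x y = 1) :
    treeWeight M ᵥ* M = treeWeight M :=
  funext fun x => (sum_treeWeight_mul_eq_sum_funnels M x).trans (sum_funnels_eq_treeWeight hrow x)

end TreeTheorem

section Stationary
variable {S : Type*} [Fintype S] [DecidableEq S]

theorem vecMul_pow_eq_self {R : Type*} [Semiring R] {M : Matrix S S R} {v : S → R}
    (hv : v ᵥ* M = v) (k : ℕ) : v ᵥ* (M ^ k) = v := by
  induction k with
  | zero => rw [pow_zero, vecMul_one]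
  | succ k ih => rw [pow_succ, ← vecMul_vecMul, ih, hv]

variable {R : Type*} [Field R] [LinearOrder R] [IsStrictOrderedRing R] {M : Matrix S S R}

theorem exists_pos_apply_of_pow_succ_apply_pos (h0 : ∀ x y, 0 ≤ M x y) {k : ℕ} {x y : S}
    (h : 0 < (M ^ (k + 1)) y x) : ∃ z, 0 < M y z ∧ 0 < (M ^ k) z x := by
  rw [pow_succ', mul_apply] at h
  obtain ⟨z, -, hz⟩ := exists_lt_of_sum_lt (s := univ) (f := fun _ => (0 : R)) (by simpa using h)
  exact ⟨z, pos_of_mul_pos_left hz (pow_apply_nonneg h0 k z x),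
    pos_of_mul_pos_right hz (h0 y z)⟩

/-- A spanning tree of positive weight is built by sending each `y ≠ x` to a neighbour strictly
closer to `x`, distance meaning the least `k` with `0 < (M ^ k) y x`. -/
theorem treeWeight_pos (h0 : ∀ x y, 0 ≤ M x y) (hirr : ∀ x y, ∃ k, 0 < (M ^ k) x y) (x : S) :
    0 < treeWeight M x := by
  have hstep : ∀ y ≠ x, ∃ z, 0 < M y z ∧ Nat.find (hirr z x) < Nat.find (hirr y x) := by
    intro y hy
    obtain ⟨k, hk⟩ : ∃ k, Nat.find (hirr y x) = k + 1 := Nat.exists_eq_succ_of_ne_zero <|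
      (Nat.find_eq_zero _).not.mpr (by simp [one_apply_ne hy])
    have hyx := Nat.find_spec (hirr y x)
    rw [hk] at hyx
    obtain ⟨z, hyz, hzx⟩ := exists_pos_apply_of_pow_succ_apply_pos h0 hyx
    exact ⟨z, hyz, hk ▸ Nat.lt_succ_of_le (Nat.find_le hzx)⟩
  choose! next hnext_pos hnext_lt using hstep
  have hg : update next x x ∈ rootedTrees x := by
    refine mem_rootedTrees.mpr ⟨mem_funnels.mpr
      (exists_iterate_eq_of_lt (fun y => Nat.find (hirr y x)) fun y hy => ?_), update_self x x next⟩
    rw [update_of_ne hy]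
    exact hnext_lt y hy
  refine (prod_pos fun y hy => ?_).trans_le
    (single_le_sum (fun g _ => prod_nonneg fun y _ => h0 _ _) hg)
  rw [update_of_ne (ne_of_mem_erase hy)]
  exact hnext_pos y (ne_of_mem_erase hy)

theorem eq_zero_of_vecMul_eq_self (h0 : ∀ x y, 0 ≤ M x y) (hirr : ∀ x y, ∃ k, 0 < (M ^ k) x y)
    {d : S → R} (hd : 0 ≤ d) (hdM : d ᵥ* M = d) {x : S} (hx : d x = 0) : d = 0 := by
  funext z
  obtain ⟨k, hk⟩ := hirr z x
  have hsum : ∑ y, d y * (M ^ k) y x = 0 := (congrFun (vecMul_pow_eq_self hdM k) x).trans hx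
  have hterm := (sum_eq_zero_iff_of_nonneg fun y _ =>
    mul_nonneg (hd y) (pow_apply_nonneg h0 k y x)).mp hsum z (mem_univ z)
  exact (mul_eq_zero.mp hterm).resolve_right hk.ne'

/-- Subtracting from `π` the largest multiple of `μ` below it leaves a nonnegative stationary
vector with a zero. -/
theorem exists_eq_smul_of_vecMul_eq_self (h0 : ∀ x y, 0 ≤ M x y)
    (hirr : ∀ x y, ∃ k, 0 < (M ^ k) x y) {π μ : S → R} (hπM : π ᵥ* M = π)
    (hμ : ∀ x, 0 < μ x) (hμM : μ ᵥ* M = μ) : ∃ t : R, π = t • μ := by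
  cases isEmpty_or_nonempty S
  · exact ⟨0, Subsingleton.elim _ _⟩
  obtain ⟨x, -, hx⟩ := exists_min_image univ (fun x => π x / μ x) univ_nonempty
  refine ⟨π x / μ x, sub_eq_zero.mp (eq_zero_of_vecMul_eq_self h0 hirr (x := x) ?_ ?_ ?_)⟩
  · intro y
    have := (le_div_iff₀ (hμ y)).mp (hx y (mem_univ y))
    simpa using this
  · rw [sub_vecMul, smul_vecMul, hπM, hμM]
  · simp [div_mul_cancel₀ _ (hμ x).ne']

theorem stationary_eq_treeWeight_div (h0 : ∀ x y, 0 ≤ M x y) (hrow : ∀ x, ∑ y, M x y = 1)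
    (hirr : ∀ x y, ∃ k, 0 < (M ^ k) x y) {π : S → R} (hπsum : ∑ x, π x = 1)
    (hπM : π ᵥ* M = π) (x : S) : π x = treeWeight M x / ∑ y, treeWeight M y := by
  obtain ⟨t, rfl⟩ := exists_eq_smul_of_vecMul_eq_self h0 hirr hπM (treeWeight_pos h0 hirr)
    (treeWeight_vecMul hrow)
  have ht : t * ∑ y, treeWeight M y = 1 := by
    rw [mul_sum]
    exact hπsum
  rw [eq_div_iff (right_ne_zero_of_mul_eq_one ht), Pi.smul_apply, smul_eq_mul, mul_right_comm,
    ht, one_mul]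

theorem pow_mul_pow_apply_le {P Q : Matrix S S R} {a : R} (ha : 0 ≤ a) (hQ0 : ∀ x y, 0 ≤ Q x y)
    (h : ∀ x y, a * Q x y ≤ P x y) (k : ℕ) (x y : S) : a ^ k * (Q ^ k) x y ≤ (P ^ k) x y := by
  induction k generalizing y with
  | zero => simp only [pow_zero, one_mul, le_refl]
  | succ k ih =>
    rw [pow_succ, pow_succ, pow_succ, mul_apply, mul_apply, mul_sum]
    refine sum_le_sum fun z _ => ?_
    calc a ^ k * a * ((Q ^ k) x z * Q z y) = (a ^ k * (Q ^ k) x z) * (a * Q z y) := by ring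
      _ ≤ (P ^ k) x z * P z y :=
        mul_le_mul (ih z) (h z y) (mul_nonneg ha (hQ0 z y))
          ((mul_nonneg (pow_nonneg ha k) (pow_apply_nonneg hQ0 k x z)).trans (ih z))

theorem pow_mul_treeWeight_le {P Q : Matrix S S R} {a : R} (ha : 0 ≤ a)
    (hQ0 : ∀ x y, 0 ≤ Q x y) (h : ∀ x y, a * Q x y ≤ P x y) (x : S) :
    a ^ (Fintype.card S - 1) * treeWeight Q x ≤ treeWeight P x := by
  rw [treeWeight, treeWeight, mul_sum]
  refine sum_le_sum fun g _ => ?_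
  rw [← card_univ, ← card_erase_of_mem (mem_univ x), ← prod_const, ← prod_mul_distrib]
  exact prod_le_prod (fun y _ => mul_nonneg ha (hQ0 y (g y))) fun y _ => h y (g y)

end Stationary

theorem sq_mul_div_sum_le_div_sum {S R : Type*} [Fintype S] [Field R] [LinearOrder R]
    [IsStrictOrderedRing R] {u v : S → R} {a : R} (ha : 0 < a) (hu : ∀ x, 0 < u x)
    (hvu : ∀ x, a * v x ≤ u x) (huv : ∀ x, a * u x ≤ v x) (x : S) :
    a ^ 2 * (v x / ∑ y, v y) ≤ u x / ∑ y, u y := by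
  have husum : 0 < ∑ y, u y := sum_pos (fun y _ => hu y) ⟨x, mem_univ x⟩
  have hsum : a * ∑ y, u y ≤ ∑ y, v y := mul_sum univ u a ▸ sum_le_sum fun y _ => huv y
  rw [← mul_div_assoc, div_le_div_iff₀ ((mul_pos ha husum).trans_le hsum) husum]
  calc a ^ 2 * v x * ∑ y, u y = (a * v x) * (a * ∑ y, u y) := by ring
    _ ≤ u x * ∑ y, v y :=
      mul_le_mul (hvu x) hsum (mul_pos ha husum).le (hu x).le

theorem stationary_comparison_of_entrywise_comparable_general
    {S : Type*} [Fintype S] [DecidableEq S]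
    (Q P : Matrix S S ℝ) (c : ℝ) (hc0 : 0 < c)
    (hQ0 : ∀ x y, 0 ≤ Q x y) (hQrow : ∀ x, ∑ y, Q x y = 1)
    (hQirr : ∀ x y, ∃ k : ℕ, 1 ≤ k ∧ 0 < (Q ^ k) x y)
    (hP0 : ∀ x y, 0 ≤ P x y) (hProw : ∀ x, ∑ y, P x y = 1)
    (hsand : ∀ x y, c * Q x y ≤ P x y ∧ P x y ≤ c⁻¹ * Q x y)
    (π πhat : S → ℝ)
    (hπsum : ∑ x, π x = 1)
    (hπstat : ∀ y, ∑ x, π x * P x y = π y)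
    (hπhatsum : ∑ x, πhat x = 1)
    (hπhatstat : ∀ y, ∑ x, πhat x * Q x y = πhat y) :
    ∀ x, c ^ (2 * (Fintype.card S - 1)) * πhat x ≤ π x ∧
      π x ≤ (c ^ (2 * (Fintype.card S - 1)))⁻¹ * πhat x := by
  intro x
  have hQP : ∀ x y, c * Q x y ≤ P x y := fun x y => (hsand x y).1
  have hPQ : ∀ x y, c * P x y ≤ Q x y := fun x y => (le_inv_mul_iff₀ hc0).mp (hsand x y).2
  have hQirr' : ∀ x y, ∃ k, 0 < (Q ^ k) x y := fun x y => (hQirr x y).imp fun _ => And.right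
  have hPirr : ∀ x y, ∃ k, 0 < (P ^ k) x y := fun x y => (hQirr' x y).imp fun k hk =>
    (mul_pos (pow_pos hc0 k) hk).trans_le (pow_mul_pow_apply_le hc0.le hQ0 hQP k x y)
  have hπ := stationary_eq_treeWeight_div hP0 hProw hPirr hπsum (funext hπstat) x
  have hπhat := stationary_eq_treeWeight_div hQ0 hQrow hQirr' hπhatsum (funext hπhatstat) x
  have hwP := pow_mul_treeWeight_le hc0.le hQ0 hQP
  have hwQ := pow_mul_treeWeight_le hc0.le hP0 hPQ
  have hcm := pow_pos hc0 (Fintype.card S - 1)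
  rw [pow_mul', le_inv_mul_iff₀ (pow_pos hcm 2), hπ, hπhat]
  exact ⟨sq_mul_div_sum_le_div_sum hcm (treeWeight_pos hP0 hPirr) hwP hwQ x,
    sq_mul_div_sum_le_div_sum hcm (treeWeight_pos hQ0 hQirr') hwQ hwP x⟩

/-- If `P` and `Q` are row-stochastic matrices on a finite set `S` of
`m` elements, `Q` is irreducible, and `c·Q(x,y) ≤ P(x,y) ≤ c⁻¹·Q(x,y)` for some
`c ∈ (0,1]`, then their stationary distributions `π` (of `P`) and `π̂` (of `Q`)
satisfy `c^{2(m-1)}·π̂_x ≤ π_x ≤ c^{-2(m-1)}·π̂_x` for every `x`. -/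
theorem stationary_comparison_of_entrywise_comparable
    {S : Type*} [Fintype S] [DecidableEq S] [Nonempty S]
    (Q P : Matrix S S ℝ) (c : ℝ) (hc0 : 0 < c) (hc1 : c ≤ 1)
    (hQ0 : ∀ x y, 0 ≤ Q x y) (hQrow : ∀ x, ∑ y, Q x y = 1)
    (hQirr : ∀ x y, ∃ k : ℕ, 1 ≤ k ∧ 0 < (Q ^ k) x y)
    (hP0 : ∀ x y, 0 ≤ P x y) (hProw : ∀ x, ∑ y, P x y = 1)
    (hsand : ∀ x y, c * Q x y ≤ P x y ∧ P x y ≤ c⁻¹ * Q x y)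
    (π πhat : S → ℝ)
    (hπ0 : ∀ x, 0 ≤ π x) (hπsum : ∑ x, π x = 1)
    (hπstat : ∀ y, ∑ x, π x * P x y = π y)
    (hπhat0 : ∀ x, 0 ≤ πhat x) (hπhatsum : ∑ x, πhat x = 1)
    (hπhatstat : ∀ y, ∑ x, πhat x * Q x y = πhat y) :
    ∀ x, c ^ (2 * (Fintype.card S - 1)) * πhat x ≤ π x ∧
      π x ≤ (c ^ (2 * (Fintype.card S - 1)))⁻¹ * πhat x :=
  stationary_comparison_of_entrywise_comparable_general Q P c hc0 hQ0 hQrow hQirr hP0 hProw hsand π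
    πhat hπsum hπstat hπhatsum hπhatstat
end

section
/- Let P be a weighted CSMA chain for (G,W) with stationary distribution π, and let π̂ be as defined. Then for every σ ∈ I(G): 2^{-6n·2^n}·π̂_σ ≤ π_σ ≤ 2^{6n·2^n}·π̂_σ. -/
open Finset

section StationaryComparison

variable {α : Type*}

def ApproxDetailedBalance (P : α → α → ℝ) (u : α → ℝ) (β : ℝ) : Prop :=
  ∀ a b, u a * P a b ≤ β * (u b * P b a)

theorem ApproxDetailedBalance.div_const {P : α → α → ℝ} {u : α → ℝ} {β : ℝ}
    (h : ApproxDetailedBalance P u β) {Z : ℝ} (hZ : 0 ≤ Z) :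
    ApproxDetailedBalance P (fun a => u a / Z) β := by
  intro a b
  simp only [div_mul_eq_mul_div, mul_div_assoc']
  exact div_le_div_of_nonneg_right (h a b) hZ

variable [Fintype α]

theorem le_mul_of_sum_eq_of_cross_le {π ν : α → ℝ} {B : ℝ} (hsum : ∑ a, π a = ∑ a, ν a)
    (hν : ∀ a, 0 < ν a) (hB : 0 ≤ B) (hcross : ∀ x y, π y * ν x ≤ B * (π x * ν y)) (y : α) :
    π y ≤ B * ν y := by
  obtain ⟨x, -, hx⟩ := exists_le_of_sum_le ⟨y, mem_univ y⟩ hsum.le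
  have key : π y * ν x ≤ B * ν y * ν x :=
    calc π y * ν x ≤ B * (π x * ν y) := hcross x y
      _ ≤ B * (ν x * ν y) := by gcongr; exact (hν y).le
      _ = B * ν y * ν x := by ring
  exact le_of_mul_le_mul_right key (hν x)

variable [DecidableEq α] {P : α → α → ℝ} {π u : α → ℝ} {β : ℝ}

theorem exists_pos_across_of_hub {o : α} (hto : ∀ a, 0 < P a o) (hfrom : ∀ b, 0 < P o b)
    (S : Finset α) (hS : S.Nonempty) (hSc : Sᶜ.Nonempty) : ∃ a ∈ S, ∃ b ∈ Sᶜ, 0 < P a b := by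
  by_cases ho : o ∈ S
  · obtain ⟨b, hb⟩ := hSc
    exact ⟨o, ho, b, hb, hfrom b⟩
  · obtain ⟨a, ha⟩ := hS
    exact ⟨a, ha, o, mem_compl.mpr ho, hto a⟩

theorem sum_flow_out_eq_sum_flow_in (hProw : ∀ a, ∑ b, P a b = 1)
    (hπ : ∀ b, ∑ a, π a * P a b = π b) (S : Finset α) :
    ∑ a ∈ S, ∑ b ∈ Sᶜ, π a * P a b = ∑ a ∈ S, ∑ b ∈ Sᶜ, π b * P b a := by
  have hout : ∑ a ∈ S, π a =
      ∑ a ∈ S, ∑ b ∈ S, π a * P a b + ∑ a ∈ S, ∑ b ∈ Sᶜ, π a * P a b := by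
    rw [← sum_add_distrib]
    refine sum_congr rfl fun a _ => ?_
    rw [sum_add_sum_compl, ← mul_sum, hProw, mul_one]
  have hin : ∑ a ∈ S, π a =
      ∑ a ∈ S, ∑ b ∈ S, π b * P b a + ∑ a ∈ S, ∑ b ∈ Sᶜ, π b * P b a := by
    rw [← sum_add_distrib]
    refine sum_congr rfl fun a _ => ?_
    rw [sum_add_sum_compl, hπ]
  have hinside : ∑ a ∈ S, ∑ b ∈ S, π a * P a b = ∑ a ∈ S, ∑ b ∈ S, π b * P b a := sum_comm
  linarith

theorem exists_le_mul_of_forall_compl_le (hP0 : ∀ a b, 0 ≤ P a b)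
    (hProw : ∀ a, ∑ b, P a b = 1) (hπ0 : ∀ a, 0 ≤ π a) (hπ : ∀ b, ∑ a, π a * P a b = π b)
    (hu : ∀ a, 0 < u a) (hrev : ApproxDetailedBalance P u β) {S : Finset α}
    (hleave : ∃ a ∈ S, ∃ b ∈ Sᶜ, 0 < P a b) {m : ℝ} (hm : ∀ b ∈ Sᶜ, π b ≤ m * u b) :
    ∃ a ∈ S, π a ≤ β * m * u a := by
  obtain ⟨a₀, ha₀, b₀, hb₀, hpos⟩ := hleave
  have hm0 : 0 ≤ m := nonneg_of_mul_nonneg_left ((hπ0 b₀).trans (hm b₀ hb₀)) (hu b₀)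
  by_contra! hlt
  have hout : ∑ a ∈ S, ∑ b ∈ Sᶜ, β * m * u a * P a b < ∑ a ∈ S, ∑ b ∈ Sᶜ, π a * P a b := by
    have hle : ∀ a ∈ S, ∀ b, β * m * u a * P a b ≤ π a * P a b := fun a ha b =>
      mul_le_mul_of_nonneg_right (hlt a ha).le (hP0 a b)
    refine sum_lt_sum (fun a ha => sum_le_sum fun b _ => hle a ha b) ⟨a₀, ha₀, ?_⟩
    exact sum_lt_sum (fun b _ => hle a₀ ha₀ b)
      ⟨b₀, hb₀, mul_lt_mul_of_pos_right (hlt a₀ ha₀) hpos⟩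
  have hin : ∑ a ∈ S, ∑ b ∈ Sᶜ, π b * P b a ≤ ∑ a ∈ S, ∑ b ∈ Sᶜ, β * m * u a * P a b := by
    refine sum_le_sum fun a _ => sum_le_sum fun b hb => ?_
    calc π b * P b a ≤ m * u b * P b a := mul_le_mul_of_nonneg_right (hm b hb) (hP0 b a)
      _ = m * (u b * P b a) := mul_assoc _ _ _
      _ ≤ m * (β * (u a * P a b)) := mul_le_mul_of_nonneg_left (hrev b a) hm0
      _ = β * m * u a * P a b := by ring
  linarith [sum_flow_out_eq_sum_flow_in hProw hπ S]

theorem mul_le_pow_mul_of_approxDetailedBalance (hP0 : ∀ a b, 0 ≤ P a b)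
    (hProw : ∀ a, ∑ b, P a b = 1) (hπ0 : ∀ a, 0 ≤ π a) (hπ : ∀ b, ∑ a, π a * P a b = π b)
    (hu : ∀ a, 0 < u a) (hrev : ApproxDetailedBalance P u β) (hβ : 1 ≤ β)
    (hcut : ∀ S : Finset α, S.Nonempty → Sᶜ.Nonempty → ∃ a ∈ S, ∃ b ∈ Sᶜ, 0 < P a b)
    (x y : α) : π y * u x ≤ β ^ (Fintype.card α - 1) * (π x * u y) := by
  set r := π x / u x with hr
  have hr0 : 0 ≤ r := div_nonneg (hπ0 x) (hu x).le
  have grow : ∀ k < Fintype.card α,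
      ∃ A : Finset α, #A = k + 1 ∧ ∀ b ∈ A, π b ≤ β ^ k * r * u b := by
    intro k
    induction k with
    | zero =>
      intro _
      refine ⟨{x}, card_singleton x, fun b hb => ?_⟩
      rw [mem_singleton.mp hb, pow_zero, one_mul, div_mul_cancel₀ _ (hu x).ne']
    | succ k ih =>
      intro hk
      obtain ⟨A, hcard, hA⟩ := ih (by omega)
      have hAc : Aᶜ.Nonempty := by
        rw [← card_pos, card_compl, hcard]
        omega
      have hA' : Aᶜᶜ.Nonempty := by
        rw [compl_compl, ← card_pos, hcard]
        omega
      obtain ⟨a, ha, hle⟩ := exists_le_mul_of_forall_compl_le hP0 hProw hπ0 hπ hu hrev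
        (hcut Aᶜ hAc hA') (m := β ^ k * r) (by simpa only [compl_compl] using hA)
      refine ⟨insert a A, by rw [card_insert_of_notMem (mem_compl.mp ha), hcard], ?_⟩
      intro b hb
      rcases mem_insert.mp hb with rfl | hb
      · rwa [pow_succ', mul_assoc β]
      · calc π b ≤ β ^ k * r * u b := hA b hb
          _ ≤ β ^ (k + 1) * r * u b := by
            gcongr
            · exact (hu b).le
            · omega
  have hN : 0 < Fintype.card α := Fintype.card_pos_iff.mpr ⟨x⟩
  obtain ⟨A, hcard, hA⟩ := grow (Fintype.card α - 1) (by omega)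
  have hy : π y ≤ β ^ (Fintype.card α - 1) * r * u y :=
    hA y (by rw [A.eq_univ_of_card (by omega)]; exact mem_univ y)
  calc π y * u x ≤ β ^ (Fintype.card α - 1) * r * u y * u x :=
        mul_le_mul_of_nonneg_right hy (hu x).le
    _ = β ^ (Fintype.card α - 1) * (π x * u y) := by
        rw [hr]
        field_simp [(hu x).ne']

end StationaryComparison

theorem prod_mul_prod_sdiff_inv {ι K : Type*} [DecidableEq ι] [CommGroupWithZero K]
    (s t : Finset ι) {f : ι → K} (hf : ∀ i, f i ≠ 0) :
    (∏ i ∈ s, f i) * ∏ i ∈ s \ t, (f i)⁻¹ = ∏ i ∈ s ∩ t, f i := by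
  rw [← prod_inter_mul_prod_sdiff s t f, mul_assoc, ← prod_mul_distrib,
    prod_congr rfl fun i _ => mul_inv_cancel₀ (hf i), prod_const_one, mul_one]

section CSMA

variable {V : Type*} [Fintype V] {G : SimpleGraph V} [DecidableRel G.Adj]

abbrev IndepFinset (G : SimpleGraph V) := {s : Finset V // IsIndep G s}

def IndepFinset.empty (G : SimpleGraph V) : IndepFinset G :=
  ⟨∅, fun i hi => absurd hi (notMem_empty i)⟩

theorem card_indepFinset_le : Fintype.card (IndepFinset G) ≤ 2 ^ Fintype.card V :=
  (Fintype.card_subtype_le _).trans Fintype.card_finset.le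

theorem pow_card_indepFinset_sub_one_le :
    ((2 : ℝ) ^ (3 * Fintype.card V)) ^ (Fintype.card (IndepFinset G) - 1) ≤
      2 ^ (6 * Fintype.card V * 2 ^ Fintype.card V) := by
  rw [← pow_mul]
  refine pow_le_pow_right₀ one_le_two ?_
  calc 3 * Fintype.card V * (Fintype.card (IndepFinset G) - 1)
      ≤ 3 * Fintype.card V * 2 ^ Fintype.card V :=
        Nat.mul_le_mul_left _ (Nat.sub_le_of_le_add (le_add_right card_indepFinset_le))
    _ ≤ 6 * Fintype.card V * 2 ^ Fintype.card V := by gcongr; norm_num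

variable [DecidableEq V] {W : V → ℝ} {P : IndepFinset G → IndepFinset G → ℝ}

def HasCSMAForm (W : V → ℝ) (P : IndepFinset G → IndepFinset G → ℝ) : Prop :=
  ∀ a, ∃ c : ℝ, 0 < c ∧ ∃ p : IndepFinset G → ℝ,
    (∀ b, p b ∈ Set.Icc (((2 : ℝ) ^ (Fintype.card V))⁻¹) 1) ∧
    ∀ b, IsIndep G (a.1 ∪ b.1) → P a b = c * (∏ i ∈ a.1 \ b.1, (W i)⁻¹) * p b

theorem csma_coeff_mem_Icc (hW : ∀ i, 1 ≤ W i) (a : IndepFinset G) (hP0 : ∀ b, 0 ≤ P a b)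
    (hProw : ∑ b, P a b = 1) (hPpos : ∀ b, 0 < P a b → IsIndep G (a.1 ∪ b.1))
    {c : ℝ} (hc : 0 < c) {p : IndepFinset G → ℝ}
    (hp : ∀ b, p b ∈ Set.Icc ((2 ^ Fintype.card V : ℝ)⁻¹) 1)
    (hform : ∀ b, IsIndep G (a.1 ∪ b.1) → P a b = c * (∏ i ∈ a.1 \ b.1, (W i)⁻¹) * p b) :
    c ∈ Set.Icc ((2 ^ Fintype.card V : ℝ)⁻¹) (2 ^ Fintype.card V) := by
  have h2 : (0 : ℝ) < 2 ^ Fintype.card V := by positivity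
  constructor
  · have hle : ∀ b, P a b ≤ c := by
      intro b
      by_cases hab : IsIndep G (a.1 ∪ b.1)
      · have hQ : ∏ i ∈ a.1 \ b.1, (W i)⁻¹ ≤ 1 :=
          prod_le_one (fun i _ => inv_nonneg.mpr (zero_le_one.trans (hW i)))
            fun i _ => inv_le_one_of_one_le₀ (hW i)
        rw [hform b hab]
        calc c * (∏ i ∈ a.1 \ b.1, (W i)⁻¹) * p b ≤ c * 1 * 1 := by
              gcongr
              · exact (hp b).1.trans' (by positivity)
              · exact (hp b).2
          _ = c := by ring
      · exact (not_lt.mp (mt (hPpos b) hab)).trans hc.le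
    have hN : (1 : ℝ) ≤ 2 ^ Fintype.card V * c :=
      calc (1 : ℝ) = ∑ b, P a b := hProw.symm
        _ ≤ ∑ _b : IndepFinset G, c := sum_le_sum fun b _ => hle b
        _ = Fintype.card (IndepFinset G) * c := by rw [sum_const, card_univ, nsmul_eq_mul]
        _ ≤ 2 ^ Fintype.card V * c := by
          gcongr
          exact_mod_cast card_indepFinset_le
    rw [inv_le_iff_one_le_mul₀ h2, mul_comm]
    exact hN
  · have haa : IsIndep G (a.1 ∪ a.1) := by rw [union_self]; exact a.2
    have hdiag : c * p a ≤ 1 := by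
      have := hform a haa
      rw [sdiff_self, bot_eq_empty, prod_empty, mul_one] at this
      rw [← this, ← hProw]
      exact single_le_sum (fun b _ => hP0 b) (mem_univ a)
    calc c = c * (2 ^ Fintype.card V : ℝ)⁻¹ * 2 ^ Fintype.card V := by field_simp
      _ ≤ c * p a * 2 ^ Fintype.card V := by gcongr; exact (hp a).1
      _ ≤ 1 * 2 ^ Fintype.card V := by gcongr
      _ = 2 ^ Fintype.card V := one_mul _

theorem csma_weight_mul_transition_mem_Icc (hW : ∀ i, 1 ≤ W i) (hP0 : ∀ a b, 0 ≤ P a b)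
    (hProw : ∀ a, ∑ b, P a b = 1) (hPpos : ∀ a b, 0 < P a b ↔ IsIndep G (a.1 ∪ b.1))
    (hPform : HasCSMAForm W P)
    {a b : IndepFinset G} (hab : IsIndep G (a.1 ∪ b.1)) :
    (∏ i ∈ a.1, W i) * P a b ∈
      Set.Icc (((2 ^ Fintype.card V : ℝ) ^ 2)⁻¹ * ∏ i ∈ a.1 ∩ b.1, W i)
        (2 ^ Fintype.card V * ∏ i ∈ a.1 ∩ b.1, W i) := by
  obtain ⟨c, hc, p, hp, hform⟩ := hPform a
  have hcI := csma_coeff_mem_Icc hW a (hP0 a) (hProw a) (fun b => (hPpos a b).mp) hc hp hform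
  have hK : 0 < ∏ i ∈ a.1 ∩ b.1, W i := prod_pos fun i _ => zero_lt_one.trans_le (hW i)
  have heq : (∏ i ∈ a.1, W i) * P a b = c * p b * ∏ i ∈ a.1 ∩ b.1, W i := by
    rw [hform b hab, ← prod_mul_prod_sdiff_inv a.1 b.1 fun i => (zero_lt_one.trans_le (hW i)).ne']
    ring
  rw [heq]
  constructor
  · gcongr
    rw [sq, mul_inv]
    exact mul_le_mul hcI.1 (hp b).1 (by positivity) hc.le
  · gcongr
    calc c * p b ≤ 2 ^ Fintype.card V * 1 :=
          mul_le_mul hcI.2 (hp b).2 ((hp b).1.trans' (by positivity)) (by positivity)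
      _ = 2 ^ Fintype.card V := mul_one _

theorem csma_approxDetailedBalance (hW : ∀ i, 1 ≤ W i) (hP0 : ∀ a b, 0 ≤ P a b)
    (hProw : ∀ a, ∑ b, P a b = 1) (hPpos : ∀ a b, 0 < P a b ↔ IsIndep G (a.1 ∪ b.1))
    (hPform : HasCSMAForm W P) :
    ApproxDetailedBalance P (fun σ => ∏ i ∈ σ.1, W i) (2 ^ (3 * Fintype.card V)) := by
  intro a b
  have hu : ∀ σ : IndepFinset G, 0 < ∏ i ∈ σ.1, W i :=
    fun σ => prod_pos fun i _ => zero_lt_one.trans_le (hW i)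
  by_cases hab : IsIndep G (a.1 ∪ b.1)
  · have hba : IsIndep G (b.1 ∪ a.1) := by rwa [union_comm]
    have hlow := (csma_weight_mul_transition_mem_Icc hW hP0 hProw hPpos hPform hba).1
    rw [inter_comm] at hlow
    calc (∏ i ∈ a.1, W i) * P a b
        ≤ 2 ^ Fintype.card V * ∏ i ∈ a.1 ∩ b.1, W i :=
          (csma_weight_mul_transition_mem_Icc hW hP0 hProw hPpos hPform hab).2
      _ = 2 ^ (3 * Fintype.card V) *
            (((2 ^ Fintype.card V : ℝ) ^ 2)⁻¹ * ∏ i ∈ a.1 ∩ b.1, W i) := by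
          field_simp
          ring
      _ ≤ 2 ^ (3 * Fintype.card V) * ((∏ i ∈ b.1, W i) * P b a) := by gcongr
  · have hzero : P a b ≤ 0 := not_lt.mp (mt (hPpos a b).mp hab)
    calc (∏ i ∈ a.1, W i) * P a b ≤ 0 := mul_nonpos_of_nonneg_of_nonpos (hu a).le hzero
      _ ≤ _ := mul_nonneg (by positivity) (mul_nonneg (hu b).le (hP0 b a))

end CSMA

theorem csma_stationary_comparable_to_pihat_general
    {V : Type*} [Fintype V] [DecidableEq V]
    (G : SimpleGraph V) [DecidableRel G.Adj]
    (W : V → ℝ) (hW : ∀ i, 1 ≤ W i)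
    (P : {s : Finset V // IsIndep G s} → {s : Finset V // IsIndep G s} → ℝ)
    (hP0 : ∀ σ σ', 0 ≤ P σ σ')
    (hProw : ∀ σ, ∑ σ', P σ σ' = 1)
    (hPpos : ∀ σ σ', 0 < P σ σ' ↔ IsIndep G (σ.1 ∪ σ'.1))
    (hPform : ∀ σ, ∃ c : ℝ, 0 < c ∧ ∃ p : {s : Finset V // IsIndep G s} → ℝ,
      (∀ σ', p σ' ∈ Set.Icc (((2 : ℝ) ^ (Fintype.card V))⁻¹) 1) ∧
      ∀ σ', IsIndep G (σ.1 ∪ σ'.1) →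
        P σ σ' = c * (∏ i ∈ σ.1 \ σ'.1, (W i)⁻¹) * p σ')
    (π : {s : Finset V // IsIndep G s} → ℝ)
    (hπ0 : ∀ σ, 0 < π σ) (hπsum : ∑ σ, π σ = 1)
    (hπstat : ∀ σ', ∑ σ, π σ * P σ σ' = π σ')
    (pihat : {s : Finset V // IsIndep G s} → ℝ)
    (hpihat : ∀ σ, pihat σ =
      (∏ i ∈ σ.1, W i) / ∑ ρ : {s : Finset V // IsIndep G s}, ∏ i ∈ ρ.1, W i) :
    ∀ σ : {s : Finset V // IsIndep G s},
      ((2 : ℝ) ^ (6 * Fintype.card V * 2 ^ (Fintype.card V)))⁻¹ * pihat σ ≤ π σ ∧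
      π σ ≤ (2 : ℝ) ^ (6 * Fintype.card V * 2 ^ (Fintype.card V)) * pihat σ := by
  set n := Fintype.card V
  have hu : ∀ σ : IndepFinset G, 0 < ∏ i ∈ σ.1, W i :=
    fun σ => prod_pos fun i _ => zero_lt_one.trans_le (hW i)
  have hZ : 0 < ∑ ρ : IndepFinset G, ∏ i ∈ ρ.1, W i := sum_pos (fun ρ _ => hu ρ) univ_nonempty
  have hpihat_pos : ∀ σ, 0 < pihat σ := fun σ => by rw [hpihat]; exact div_pos (hu σ) hZ
  have hsum : ∑ σ, π σ = ∑ σ, pihat σ := by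
    simp only [hπsum, hpihat, ← sum_div, div_self hZ.ne']
  have hrev : ApproxDetailedBalance P pihat (2 ^ (3 * n)) := by
    simpa only [← hpihat] using
      (csma_approxDetailedBalance hW hP0 hProw hPpos hPform).div_const hZ.le
  have hcut := exists_pos_across_of_hub (o := IndepFinset.empty G)
    (fun a => (hPpos a _).mpr (by simpa [IndepFinset.empty] using a.2))
    (fun b => (hPpos _ b).mpr (by simpa [IndepFinset.empty] using b.2))
  have hcross : ∀ x y, π y * pihat x ≤ 2 ^ (6 * n * 2 ^ n) * (π x * pihat y) := fun x y =>
    (mul_le_pow_mul_of_approxDetailedBalance hP0 hProw (fun a => (hπ0 a).le) hπstat hpihat_pos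
      hrev (one_le_pow₀ one_le_two) hcut x y).trans
      (mul_le_mul_of_nonneg_right pow_card_indepFinset_sub_one_le
        (mul_nonneg (hπ0 x).le (hpihat_pos y).le))
  intro σ
  refine ⟨(inv_mul_le_iff₀ (by positivity)).mpr ?_,
    le_mul_of_sum_eq_of_cross_le hsum hpihat_pos (by positivity) hcross σ⟩
  exact le_mul_of_sum_eq_of_cross_le hsum.symm hπ0 (by positivity)
    (fun x y => by linarith [hcross y x, mul_comm (π x) (pihat y), mul_comm (π y) (pihat x)]) σ

/-- For a weighted CSMA chain `P` for `(G, W)` with stationary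
distribution `π`, and `π̂_σ = (∏_{i∈σ} W_i)/Z`, one has
`2^{-6n·2^n}·π̂_σ ≤ π_σ ≤ 2^{6n·2^n}·π̂_σ` for every independent set `σ`. -/
theorem csma_stationary_comparable_to_pihat
    {V : Type*} [Fintype V] [DecidableEq V] [Nonempty V]
    (G : SimpleGraph V) [DecidableRel G.Adj]
    (W : V → ℝ) (hW : ∀ i, 1 ≤ W i)
    (P : {s : Finset V // IsIndep G s} → {s : Finset V // IsIndep G s} → ℝ)
    (hP0 : ∀ σ σ', 0 ≤ P σ σ')
    (hProw : ∀ σ, ∑ σ', P σ σ' = 1)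
    (hPpos : ∀ σ σ', 0 < P σ σ' ↔ IsIndep G (σ.1 ∪ σ'.1))
    (hPform : ∀ σ, ∃ c : ℝ, 0 < c ∧ ∃ p : {s : Finset V // IsIndep G s} → ℝ,
      (∀ σ', p σ' ∈ Set.Icc (((2 : ℝ) ^ (Fintype.card V))⁻¹) 1) ∧
      ∀ σ', IsIndep G (σ.1 ∪ σ'.1) →
        P σ σ' = c * (∏ i ∈ σ.1 \ σ'.1, (W i)⁻¹) * p σ')
    (π : {s : Finset V // IsIndep G s} → ℝ)
    (hπ0 : ∀ σ, 0 < π σ) (hπsum : ∑ σ, π σ = 1)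
    (hπstat : ∀ σ', ∑ σ, π σ * P σ σ' = π σ')
    (pihat : {s : Finset V // IsIndep G s} → ℝ)
    (hpihat : ∀ σ, pihat σ =
      (∏ i ∈ σ.1, W i) / ∑ ρ : {s : Finset V // IsIndep G s}, ∏ i ∈ ρ.1, W i) :
    ∀ σ : {s : Finset V // IsIndep G s},
      ((2 : ℝ) ^ (6 * Fintype.card V * 2 ^ (Fintype.card V)))⁻¹ * pihat σ ≤ π σ ∧
      π σ ≤ (2 : ℝ) ^ (6 * Fintype.card V * 2 ^ (Fintype.card V)) * pihat σ :=
  csma_stationary_comparable_to_pihat_general G W hW P hP0 hProw hPpos hPform π hπ0 hπsum hπstat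
    pihat hpihat
end
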